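/- Let V be an n-dimensional vector space over a field of characteristic zero and Ω a nonzero element of ⋀ⁿV*. Then: (i) for each 0 ≤ k ≤ n, the contraction map ⋀^k V → ⋀^{n−k} V*, ω ↦ ι_ω Ω, is injective (hence bijective by dimension count); (ii) if β ∈ ⋀² V satisfies β^{∧r} ≠ 0 and β^{∧(r+1)} = 0, then the differential form e^β · Ω := Σ_{k=0}^{r} (1/k!) ι_{β^{∧k}} Ω has nonzero homogeneous component exactly in lowest degree n − 2r, i.e. the minimal degree of a nonzero homogeneous component of e^β·Ω equals n − 2·rank(β). -/

import Mathlib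

/-!
Fix a basis `eᵢ` of `V` with dual basis `eⁱ`, and let `e_S`, `e^S` be the wedge products over a
finset `S` taken in increasing order. Contraction by `e_S` sends `e^T`, for `S ⊆ T`, to
`± e^(T \ S)`. As `⋀ⁿV*` is a line, `Ω` is a nonzero multiple of `e^univ`, so `ω ↦ ι_ω Ω` maps the
basis `{e_S : #S = k}` of `⋀ᵏV` to nonzero multiples of the distinct basis vectors `e^Sᶜ` of
`⋀ⁿ⁻ᵏV*`. Hence it is injective, and bijective because both spaces have dimension `n.choose k`.
For (ii), the `k`-th term of `e^β·Ω` is homogeneous of degree `n - 2k`; the term `k = r` is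
nonzero by injectivity, and `β^r ≠ 0` forces `2r ≤ n`, so these degrees are pairwise distinct.
-/

section GradedProjection

variable {ι R A κ : Type*} [DecidableEq ι] [AddMonoid ι] [CommSemiring R] [Semiring A]
  [Algebra R A] (𝒜 : ι → Submodule R A) [GradedAlgebra 𝒜]

theorem GradedAlgebra.proj_sum_of_mem {s : Finset κ} {x : κ → A} {deg : κ → ι}
    (hx : ∀ k ∈ s, x k ∈ 𝒜 (deg k)) (i : ι) :
    GradedAlgebra.proj 𝒜 i (∑ k ∈ s, x k) = ∑ k ∈ s with deg k = i, x k := by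
  rw [map_sum, Finset.sum_filter]
  refine Finset.sum_congr rfl fun k hk => ?_
  rw [GradedAlgebra.proj_apply]
  split_ifs with h
  · rw [← h, DirectSum.decompose_of_mem_same 𝒜 (hx k hk)]
  · exact DirectSum.decompose_of_mem_ne 𝒜 (hx k hk) h

end GradedProjection

namespace ExteriorAlgebra

open CliffordAlgebra (contractLeft)
open Finset

section CommRing

variable {R M : Type*} [CommRing R] [AddCommGroup M] [Module R M]

theorem pow_mem_exteriorPower {i : ℕ} {x : ExteriorAlgebra R M} (hx : x ∈ ⋀[R]^i M) (k : ℕ) :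
    x ^ k ∈ ⋀[R]^(i * k) M := by
  rw [exteriorPower, pow_mul]
  exact Submodule.pow_mem_pow _ hx k

theorem contractLeft_mem_exteriorPower (d : Module.Dual R M) {m : ℕ} {x : ExteriorAlgebra R M}
    (hx : x ∈ ⋀[R]^m M) : contractLeft (Q := 0) d x ∈ ⋀[R]^(m - 1) M := by
  induction hx using Submodule.pow_induction_on_left' with
  | algebraMap r => rw [CliffordAlgebra.contractLeft_algebraMap]; exact zero_mem _
  | add x y i _ _ hx hy => rw [map_add]; exact add_mem hx hy
  | mem_mul v hv i x hx ih =>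
    obtain ⟨v, rfl⟩ := hv
    rw [CliffordAlgebra.contractLeft_ι_mul, Nat.succ_sub_one]
    refine sub_mem (Submodule.smul_mem _ _ hx) ?_
    cases i with
    | zero =>
      rw [pow_zero] at hx
      obtain ⟨r, rfl⟩ := Submodule.mem_one.mp hx
      rw [CliffordAlgebra.contractLeft_algebraMap, mul_zero]
      exact zero_mem _
    | succ j =>
      rw [Nat.add_sub_cancel] at ih
      rw [exteriorPower, pow_succ']
      exact Submodule.mul_mem_mul (LinearMap.mem_range_self _ _) ih

variable {I : Type*} [LinearOrder I]

variable (R) in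
noncomputable def sortedWedge (g : I → M) (S : Finset I) : ExteriorAlgebra R M :=
  ((S.sort (· ≤ ·)).map fun i => ι R (g i)).prod

@[simp]
theorem sortedWedge_empty (g : I → M) : sortedWedge R g ∅ = 1 := by
  simp [sortedWedge]

theorem sortedWedge_insert_of_lt (g : I → M) {a : I} {S : Finset I} (ha : ∀ j ∈ S, a < j) :
    sortedWedge R g (insert a S) = ι R (g a) * sortedWedge R g S := by
  rw [sortedWedge, Finset.sort_insert _ (fun j hj => (ha j hj).le) fun h => (ha a h).false]
  simp [sortedWedge]

theorem ιMulti_family_eq_sortedWedge {n : ℕ} (g : I → M) (s : Set.powersetCard I n) :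
    ιMulti_family R n g s = sortedWedge R g s.val := by
  have hsort : List.ofFn (s.val.orderEmbOfFin s.prop) = s.val.sort (· ≤ ·) :=
    List.ext_getElem (by simp) fun i _ _ => by rw [List.getElem_ofFn]; rfl
  simp only [ιMulti_apply, sortedWedge, Set.powersetCard.ofFinEmbEquiv_symm_apply,
    Function.comp_apply, List.ofFn_comp', hsort, List.map_map, Function.comp_def]

theorem contractLeft_sortedWedge_of_forall_eq_zero {d : Module.Dual R M} {g : I → M}
    {S : Finset I} (hd : ∀ j ∈ S, d (g j) = 0) : contractLeft d (sortedWedge R g S) = 0 := by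
  classical
  induction S using Finset.induction_on_min with
  | empty => simp
  | insert a S ha ih =>
    rw [sortedWedge_insert_of_lt g ha, CliffordAlgebra.contractLeft_ι_mul,
      hd a (mem_insert_self a S), ih fun j hj => hd j (mem_insert_of_mem hj)]
    simp

theorem contractLeft_sortedWedge_of_mem {d : Module.Dual R M} {g : I → M} {S : Finset I} {a : I}
    (haS : a ∈ S) (hda : d (g a) = 1) (hd : ∀ j ∈ S, j ≠ a → d (g j) = 0) :
    contractLeft d (sortedWedge R g S) =
      (-1 : R) ^ #{j ∈ S | j < a} • sortedWedge R g (S.erase a) := by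
  classical
  induction S using Finset.induction_on_min with
  | empty => simp at haS
  | insert m S hm ih =>
    rw [sortedWedge_insert_of_lt g hm, CliffordAlgebra.contractLeft_ι_mul]
    rcases eq_or_ne a m with rfl | ham
    · have hS : ∀ j ∈ S, d (g j) = 0 := fun j hj => hd j (mem_insert_of_mem hj) (hm j hj).ne'
      have hlt : {j ∈ insert a S | j < a} = ∅ :=
        filter_eq_empty_iff.mpr fun j hj => by
          rcases mem_insert.mp hj with rfl | hj
          exacts [lt_irrefl j, (hm j hj).not_gt]
      rw [hda, contractLeft_sortedWedge_of_forall_eq_zero hS, hlt,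
        erase_insert fun h => (hm a h).false]
      simp
    · have haS' : a ∈ S := (mem_insert.mp haS).resolve_left ham
      rw [hd m (mem_insert_self m S) ham.symm, ih haS' fun j hj => hd j (mem_insert_of_mem hj),
        filter_insert, if_pos (hm a haS'),
        card_insert_of_notMem fun h => (hm m (mem_filter.mp h).1).false,
        erase_insert_of_ne ham.symm,
        sortedWedge_insert_of_lt g fun j hj => hm j (mem_of_mem_erase hj)]
      simp [pow_succ]

end CommRing

theorem exteriorPower_eq_bot_of_finrank_lt {K M : Type*} [Field K] [AddCommGroup M] [Module K M]
    [FiniteDimensional K M] {m : ℕ} (h : Module.finrank K M < m) : ⋀[K]^m M = ⊥ := by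
  rw [← Submodule.finrank_eq_zero, exteriorPower.finrank_eq, Nat.choose_eq_zero_of_lt h]

end ExteriorAlgebra

open Module

variable (K : Type*) [Field K] [CharZero K]
variable (V : Type*) [AddCommGroup V] [Module K V] [FiniteDimensional K V]

/-- Interior product (contraction) of multivectors in `⋀V` against differential forms in
`⋀V*`, as an algebra homomorphism `⋀V → End(⋀V*)` obtained by extending
`v ↦ ι_v` (contraction by `v`, which squares to zero). For `ω ∈ ⋀^k V` this lowers the
degree of forms by `k`. -/
noncomputable def contractionMap :
    ExteriorAlgebra K V →ₐ[K] Module.End K (ExteriorAlgebra K (Module.Dual K V)) :=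
  CliffordAlgebra.lift (0 : QuadraticForm K V)
    ⟨((CliffordAlgebra.contractLeft
          (Q := (0 : QuadraticForm K (Module.Dual K V)))).comp (Module.Dual.eval K V)),
      fun v => by
        refine LinearMap.ext fun x => ?_
        simp only [Module.End.mul_apply, LinearMap.comp_apply]
        rw [CliffordAlgebra.contractLeft_contractLeft]
        simp⟩

namespace contractionMap

open ExteriorAlgebra Finset
open CliffordAlgebra (contractLeft)

variable {K : Type*} [Field K] {V : Type*} [AddCommGroup V] [Module K V]

theorem apply_ι (v : V) :
    contractionMap K V (ι K v) = contractLeft (Module.Dual.eval K V v) :=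
  CliffordAlgebra.lift_ι_apply _ _ v

theorem apply_mem_exteriorPower {k m : ℕ} {ω : ExteriorAlgebra K V} (hω : ω ∈ ⋀[K]^k V)
    {x : ExteriorAlgebra K (Dual K V)} (hx : x ∈ ⋀[K]^m (Dual K V)) :
    contractionMap K V ω x ∈ ⋀[K]^(m - k) (Dual K V) := by
  induction hω using Submodule.pow_induction_on_left' with
  | algebraMap r =>
    rw [AlgHom.commutes, Module.algebraMap_end_apply]
    exact Submodule.smul_mem _ _ hx
  | add y z i _ _ hy hz => rw [map_add, LinearMap.add_apply]; exact add_mem hy hz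
  | mem_mul v hv i ω hω ih =>
    obtain ⟨v, rfl⟩ := hv
    rw [map_mul, Module.End.mul_apply, apply_ι, Nat.sub_succ]
    exact contractLeft_mem_exteriorPower _ ih

theorem apply_sortedWedge_of_subset {I : Type*} [LinearOrder I] [Finite I] (b : Basis I K V)
    {S T : Finset I} (hST : S ⊆ T) :
    ∃ ε : K, ε ≠ 0 ∧ contractionMap K V (sortedWedge K b S) (sortedWedge K b.dualBasis T) =
      ε • sortedWedge K b.dualBasis (T \ S) := by
  classical
  induction S using Finset.induction_on_min with
  | empty => exact ⟨1, one_ne_zero, by simp⟩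
  | insert m S hm ih =>
    have hmT : m ∈ T \ S :=
      mem_sdiff.mpr ⟨hST (mem_insert_self m S), fun h => (hm m h).false⟩
    obtain ⟨ε, hε, hεeq⟩ := ih ((subset_insert m S).trans hST)
    refine ⟨ε * (-1) ^ #{j ∈ T \ S | j < m},
      mul_ne_zero hε (pow_ne_zero _ (neg_ne_zero.mpr one_ne_zero)), ?_⟩
    rw [sortedWedge_insert_of_lt _ hm, map_mul, Module.End.mul_apply, hεeq, apply_ι, map_smul,
      contractLeft_sortedWedge_of_mem hmT (by simp) (fun j _ hj => by simp [Ne.symm hj]),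
      smul_smul, sdiff_insert]

noncomputable def onExteriorPower {m : ℕ} {Ω : ExteriorAlgebra K (Dual K V)}
    (hΩ : Ω ∈ ⋀[K]^m (Dual K V)) (k : ℕ) : ⋀[K]^k V →ₗ[K] ⋀[K]^(m - k) (Dual K V) :=
  (LinearMap.applyₗ Ω ∘ₗ (contractionMap K V).toLinearMap ∘ₗ (⋀[K]^k V).subtype).codRestrict _
    fun ω => apply_mem_exteriorPower ω.2 hΩ

@[simp]
theorem coe_onExteriorPower_apply {m : ℕ} {Ω : ExteriorAlgebra K (Dual K V)}
    (hΩ : Ω ∈ ⋀[K]^m (Dual K V)) {k : ℕ} (ω : ⋀[K]^k V) :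
    (onExteriorPower hΩ k ω : ExteriorAlgebra K (Dual K V)) = contractionMap K V ω Ω :=
  rfl

variable [FiniteDimensional K V]

theorem onExteriorPower_injective {Ω : ExteriorAlgebra K (Dual K V)}
    (hΩ : Ω ∈ ⋀[K]^(finrank K V) (Dual K V)) (hΩ0 : Ω ≠ 0) {k : ℕ} (hk : k ≤ finrank K V) :
    Function.Injective (onExteriorPower hΩ k) := by
  set n := finrank K V
  let b : Basis (Fin n) K V := Module.finBasis K V
  let B := b.exteriorPower k
  let B' := b.dualBasis.exteriorPower (n - k)
  let top : Set.powersetCard (Fin n) n := Set.powersetCard.ofCard (s := univ) (by simp)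
  have hvol : (b.dualBasis.exteriorPower n top : ExteriorAlgebra K (Dual K V)) =
      sortedWedge K b.dualBasis univ := by
    simp [top, ιMulti_family_eq_sortedWedge]
  obtain ⟨a, ha⟩ : ∃ a : K, a • sortedWedge K b.dualBasis univ = Ω := by
    have hline : finrank K (⋀[K]^n (Dual K V)) = 1 := by
      rw [exteriorPower.finrank_eq, Subspace.dual_finrank_eq, Nat.choose_self]
    obtain ⟨a, ha⟩ := (finrank_eq_one_iff_of_nonzero' _
      ((b.dualBasis.exteriorPower n).ne_zero top)).mp hline ⟨Ω, hΩ⟩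
    exact ⟨a, by rw [← hvol]; exact congrArg Subtype.val ha⟩
  have ha0 : a ≠ 0 := by rintro rfl; exact hΩ0 (by rw [← ha, zero_smul])
  let compl : Set.powersetCard (Fin n) k ≃ Set.powersetCard (Fin n) (n - k) :=
    Set.powersetCard.compl (by simp; omega)
  choose ε hε hεeq using fun s : Set.powersetCard (Fin n) k =>
    apply_sortedWedge_of_subset b (subset_univ s.val)
  have himage : onExteriorPower hΩ k ∘ B = fun s => (a * ε s) • B' (compl s) := by
    ext s
    simp [-Basis.coe_dualBasis, B, B', compl, ιMulti_family_eq_sortedWedge, ← ha, hεeq, smul_smul,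
      compl_eq_univ_sdiff]
  refine LinearMap.injective_of_linearIndependent B.span_eq ?_
  rw [himage]
  exact (B'.linearIndependent.comp compl compl.injective).units_smul
    fun s => Units.mk0 _ (mul_ne_zero ha0 (hε s))

theorem eq_zero_of_apply_eq_zero {Ω : ExteriorAlgebra K (Dual K V)}
    (hΩ : Ω ∈ ⋀[K]^(finrank K V) (Dual K V)) (hΩ0 : Ω ≠ 0) {k : ℕ} (hk : k ≤ finrank K V)
    {ω : ExteriorAlgebra K V} (hω : ω ∈ ⋀[K]^k V) (h : contractionMap K V ω Ω = 0) : ω = 0 :=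
  congrArg Subtype.val ((injective_iff_map_eq_zero _).mp (onExteriorPower_injective hΩ hΩ0 hk)
    ⟨ω, hω⟩ (Subtype.ext h))

theorem onExteriorPower_bijective {Ω : ExteriorAlgebra K (Dual K V)}
    (hΩ : Ω ∈ ⋀[K]^(finrank K V) (Dual K V)) (hΩ0 : Ω ≠ 0) {k : ℕ} (hk : k ≤ finrank K V) :
    Function.Bijective (onExteriorPower hΩ k) := by
  have hinj := onExteriorPower_injective hΩ hΩ0 hk
  refine ⟨hinj, (LinearMap.injective_iff_surjective_of_finrank_eq_finrank ?_).mp hinj⟩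
  rw [exteriorPower.finrank_eq, exteriorPower.finrank_eq, Subspace.dual_finrank_eq,
    Nat.choose_symm hk]

end contractionMap

/-- Let `V` be an `n`-dimensional vector space over a field of
characteristic zero and `Ω ≠ 0` an element of `⋀ⁿV*`. Then:
(i) for each `0 ≤ k ≤ n` the contraction map `⋀^k V → ⋀^{n−k} V*`, `ω ↦ ι_ω Ω`, is
injective (hence bijective by dimension count, i.e. it maps into and onto `⋀^{n−k}V*`);
(ii) if `β ∈ ⋀²V` satisfies `β^r ≠ 0` and `β^{r+1} = 0`, then the form
`e^β·Ω = Σ_{k=0}^{r} (1/k!) ι_{β^k} Ω` has nonzero homogeneous component exactly in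
lowest degree `n − 2r`: its degree-`(n−2r)` component is nonzero and all its homogeneous
components of degree `< n − 2r` vanish. -/
theorem stmt_13 (n : ℕ) (hn : n = Module.finrank K V)
    (Ω : ExteriorAlgebra K (Module.Dual K V))
    (hΩmem : Ω ∈ ⋀[K]^n (Module.Dual K V)) (hΩ : Ω ≠ 0) :
    (∀ k : ℕ, k ≤ n →
      (∀ ω : ExteriorAlgebra K V, ω ∈ ⋀[K]^k V →
          contractionMap K V ω Ω ∈ ⋀[K]^(n - k) (Module.Dual K V)) ∧
      (∀ ω₁ ω₂ : ExteriorAlgebra K V, ω₁ ∈ ⋀[K]^k V → ω₂ ∈ ⋀[K]^k V →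
          contractionMap K V ω₁ Ω = contractionMap K V ω₂ Ω → ω₁ = ω₂) ∧
      (∀ η ∈ ⋀[K]^(n - k) (Module.Dual K V),
          ∃ ω ∈ ⋀[K]^k V, contractionMap K V ω Ω = η)) ∧
    (∀ (β : ExteriorAlgebra K V) (r : ℕ), β ∈ ⋀[K]^2 V →
      β ^ r ≠ 0 → β ^ (r + 1) = 0 →
      GradedAlgebra.proj (fun i : ℕ => ⋀[K]^i (Module.Dual K V)) (n - 2 * r)
          (∑ k ∈ Finset.range (r + 1),
            ((Nat.factorial k : K)⁻¹) • contractionMap K V (β ^ k) Ω) ≠ 0 ∧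
      (∀ d : ℕ, d < n - 2 * r →
        GradedAlgebra.proj (fun i : ℕ => ⋀[K]^i (Module.Dual K V)) d
          (∑ k ∈ Finset.range (r + 1),
            ((Nat.factorial k : K)⁻¹) • contractionMap K V (β ^ k) Ω) = 0)) := by
  subst hn
  refine ⟨fun k hk => ⟨fun ω hω => contractionMap.apply_mem_exteriorPower hω hΩmem,
    fun ω₁ ω₂ h₁ h₂ h => ?_, fun η hη => ?_⟩, fun β r hβ hβr _ => ?_⟩
  · exact congrArg Subtype.val (contractionMap.onExteriorPower_injective hΩmem hΩ hk
      (a₁ := ⟨ω₁, h₁⟩) (a₂ := ⟨ω₂, h₂⟩) (Subtype.ext h))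
  · obtain ⟨ω, hω⟩ := (contractionMap.onExteriorPower_bijective hΩmem hΩ hk).2 ⟨η, hη⟩
    exact ⟨ω, ω.2, congrArg Subtype.val hω⟩
  have hβpow := ExteriorAlgebra.pow_mem_exteriorPower hβ
  have h2r : 2 * r ≤ finrank K V := by
    by_contra! h
    exact hβr (by simpa [ExteriorAlgebra.exteriorPower_eq_bot_of_finrank_lt h] using hβpow r)
  have hterm : ∀ k ∈ Finset.range (r + 1), (k.factorial : K)⁻¹ • contractionMap K V (β ^ k) Ω ∈
      ⋀[K]^(finrank K V - 2 * k) (Dual K V) := fun k _ =>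
    Submodule.smul_mem _ _ (contractionMap.apply_mem_exteriorPower (hβpow k) hΩmem)
  simp only [GradedAlgebra.proj_sum_of_mem (fun i => ⋀[K]^i (Dual K V))
    (deg := fun k => finrank K V - 2 * k) hterm]
  refine ⟨?_, fun d hd => Finset.sum_eq_zero fun k hk => ?_⟩
  · have hlowest : {k ∈ Finset.range (r + 1) | finrank K V - 2 * k = finrank K V - 2 * r} =
        {r} := by
      ext k
      simp only [Finset.mem_filter, Finset.mem_range, Finset.mem_singleton]
      omega
    rw [hlowest, Finset.sum_singleton]
    exact smul_ne_zero (inv_ne_zero (Nat.cast_ne_zero.mpr r.factorial_ne_zero))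
      fun h => hβr (contractionMap.eq_zero_of_apply_eq_zero hΩmem hΩ h2r (hβpow r) h)
  · rw [Finset.mem_filter, Finset.mem_range] at hk
    omega
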